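/- Define J₀ : ℝ → ℝ by J₀(x) = (1/(2π)) · ∫_{φ=−π}^{π} cos(x · sin(φ)) dφ. Then for every real number a, ∫_{μ=0}^{1} J₀(a·μ) / √(1 − μ²) dμ = (π/2) · ( J₀(a/2) )². -/

import Mathlib

/-!
Since `2π ∫_{-π}^{π} J₀(a sin θ) dθ` is the integral of `cos (a sin θ sin φ)` over the torus and
`a sin θ sin φ = (a/2) cos (θ - φ) - (a/2) cos (θ + φ)`, the integrand splits as
`C (θ - φ) C (θ + φ) + S (θ - φ) S (θ + φ)` with `C = cos ((a/2) cos ·)`,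
`S = sin ((a/2) cos ·)`.
The substitution `(θ, φ) ↦ (θ - φ, θ + φ)` covers the torus twice with Jacobian `2`, so each term
becomes a product of single integrals, and `∫ C = 2π J₀(a/2)`, `∫ S = 0`. Hence
`∫_{-π}^{π} J₀(a sin θ) dθ = 2π J₀(a/2)²`; by the symmetries of `θ ↦ J₀(a sin θ)` a quarter of this
is the integral over `(0, π/2)`, which `μ = sin θ` turns into the integral over `(0, 1)`.
-/

open Real MeasureTheory Set intervalIntegral Function

/-- The Bessel function of the first kind of order zero, via its integral
representation J₀(x) = (1/(2π)) ∫_{−π}^{π} cos(x sinφ) dφ. -/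
noncomputable def besselJ0 (x : ℝ) : ℝ :=
  (1 / (2 * Real.pi)) * ∫ φ in (-Real.pi)..Real.pi, Real.cos (x * Real.sin φ)

namespace Function.Periodic

variable {E : Type*} [NormedAddCommGroup E] [NormedSpace ℝ E] {g : ℝ → E} {T : ℝ}

lemma intervalIntegral_comp_add_right (hg : Periodic g T) (t c : ℝ) :
    ∫ x in t..t + T, g (x + c) = ∫ x in t..t + T, g x := by
  rw [intervalIntegral.integral_comp_add_right, add_right_comm, hg.intervalIntegral_add_eq]

lemma intervalIntegral_comp_sub_left (hg : Periodic g T) (t c : ℝ) :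
    ∫ x in t..t + T, g (c - x) = ∫ x in t..t + T, g x := by
  rw [intervalIntegral.integral_comp_sub_left, show c - t = c - (t + T) + T by ring,
    hg.intervalIntegral_add_eq]

lemma intervalIntegral_comp_zsmul_add (hg : Periodic g T)
    (h_int : ∀ t₁ t₂, IntervalIntegrable g volume t₁ t₂) {n : ℤ} (hn : n ≠ 0) (t c : ℝ) :
    ∫ x in t..t + T, g (n * x + c) = ∫ x in t..t + T, g x := by
  have hn' : (n : ℝ) ≠ 0 := Int.cast_ne_zero.mpr hn
  rw [intervalIntegral.integral_comp_mul_add _ hn',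
    show n * (t + T) + c = (n * t + c) + n • T by rw [zsmul_eq_mul]; ring,
    hg.intervalIntegral_add_zsmul_eq n _ h_int, hg.intervalIntegral_add_eq _ t,
    ← Int.cast_smul_eq_zsmul ℝ, smul_smul, inv_mul_cancel₀ hn', one_smul]

end Function.Periodic

lemma intervalIntegral_intervalIntegral_mul_sub_add {p q : ℝ → ℝ} {T : ℝ}
    (hp : Continuous p) (hq : Continuous q) (hpT : Periodic p T) (hqT : Periodic q T) (t : ℝ) :
    ∫ θ in t..t + T, ∫ φ in t..t + T, p (θ - φ) * q (θ + φ) =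
      (∫ x in t..t + T, p x) * ∫ x in t..t + T, q x := by
  have reflect (θ : ℝ) : ∫ φ in t..t + T, p (θ - φ) * q (θ + φ) =
      ∫ ψ in t..t + T, p ψ * q (2 * θ - ψ) := by
    have hper : Periodic (fun φ ↦ p (θ - φ) * q (θ + φ)) T := fun φ ↦ by
      simp only [sub_add_eq_sub_sub, hpT.sub_eq, ← add_assoc, hqT (θ + φ)]
    rw [← hper.intervalIntegral_comp_sub_left t θ]
    congr with ψ
    ring_nf
  have double (ψ : ℝ) : ∫ θ in t..t + T, p ψ * q (2 * θ - ψ) = p ψ * ∫ x in t..t + T, q x := by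
    rw [intervalIntegral.integral_const_mul,
      ← hqT.intervalIntegral_comp_zsmul_add hq.intervalIntegrable two_ne_zero t (-ψ)]
    push_cast
    simp only [sub_eq_add_neg]
  have hint : IntegrableOn (uncurry fun θ ψ ↦ p ψ * q (2 * θ - ψ))
      (uIoc t (t + T) ×ˢ uIoc t (t + T)) :=
    (ContinuousOn.integrableOn_compact (isCompact_uIcc.prod isCompact_uIcc)
      ((hp.comp continuous_snd).mul (hq.comp (by fun_prop))).continuousOn).mono_set
      (prod_mono uIoc_subset_uIcc uIoc_subset_uIcc)
  simp_rw [reflect]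
  rw [intervalIntegral_intervalIntegral_swap hint]
  simp_rw [double]
  rw [intervalIntegral.integral_mul_const]

lemma intervalIntegral_eq_two_mul_half_of_symmetric {f : ℝ → ℝ} {a b : ℝ}
    (hf : ∀ x, f (a + b - x) = f x) (hint : IntervalIntegrable f volume a b) :
    ∫ x in a..b, f x = 2 * ∫ x in a..(a + b) / 2, f x := by
  have hmid : (a + b) / 2 ∈ uIcc a b := by
    rcases le_total a b with h | h <;> simp only [mem_uIcc] <;> [left; right] <;>
      constructor <;> linarith
  have hreflect : ∫ x in (a + b) / 2..b, f x = ∫ x in a..(a + b) / 2, f x := by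
    have := intervalIntegral.integral_comp_sub_left (a := a) (b := (a + b) / 2) f (a + b)
    simp only [hf, show a + b - (a + b) / 2 = (a + b) / 2 by ring, add_sub_cancel_left] at this
    exact this.symm
  rw [← intervalIntegral.integral_add_adjacent_intervals
    (hint.mono_set (uIcc_subset_uIcc_left hmid)) (hint.mono_set (uIcc_subset_uIcc_right hmid)),
    hreflect, two_mul]

lemma integral_Ioo_div_sqrt_one_sub_sq (f : ℝ → ℝ) :
    ∫ μ in Ioo 0 1, f μ / √(1 - μ ^ 2) = ∫ θ in 0..π / 2, f (sin θ) := by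
  have hsub : Icc 0 (π / 2) ⊆ Icc (-(π / 2)) (π / 2) :=
    Icc_subset_Icc (by linarith [pi_pos]) le_rfl
  have himage : sin '' Ioo 0 (π / 2) = Ioo 0 1 := by
    simpa using continuous_sin.continuousOn.image_Ioo_of_strictMonoOn (by positivity)
      (strictMonoOn_sin.mono hsub)
  rw [← himage, integral_image_eq_integral_abs_deriv_smul measurableSet_Ioo
    (fun θ _ ↦ (hasDerivAt_sin θ).hasDerivWithinAt)
    (injOn_sin.mono (Ioo_subset_Icc_self.trans hsub)),
    intervalIntegral.integral_of_le (by positivity), integral_Ioc_eq_integral_Ioo]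
  refine setIntegral_congr_fun measurableSet_Ioo fun θ hθ ↦ ?_
  have hcos : 0 < cos θ := cos_pos_of_mem_Ioo ⟨by linarith [hθ.1, pi_pos], hθ.2⟩
  rw [← cos_sq', sqrt_sq hcos.le, abs_of_pos hcos, smul_eq_mul, mul_div_cancel₀ _ hcos.ne']

lemma continuous_besselJ0 : Continuous besselJ0 :=
  continuous_const.mul <| continuous_parametric_intervalIntegral_of_continuous'
    (f := fun x φ ↦ cos (x * sin φ)) (by fun_prop) _ _

lemma besselJ0_neg (x : ℝ) : besselJ0 (-x) = besselJ0 x := by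
  simp only [besselJ0, neg_mul, cos_neg]

lemma integral_cos_mul_sin (x : ℝ) : ∫ φ in -π..π, cos (x * sin φ) = 2 * π * besselJ0 x := by
  rw [besselJ0]
  field_simp

private lemma neg_pi_add_two_pi : -π + 2 * π = π := by ring

lemma integral_cos_mul_cos (x : ℝ) : ∫ t in -π..π, cos (x * cos t) = 2 * π * besselJ0 x := by
  have hper : Periodic (fun t ↦ cos (x * sin t)) (2 * π) := fun t ↦ by simp [sin_add_two_pi]
  calc ∫ t in -π..π, cos (x * cos t) = ∫ t in -π..π, cos (x * sin (t + π / 2)) := by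
        simp_rw [sin_add_pi_div_two]
    _ = ∫ t in -π..π, cos (x * sin t) := by
        simpa only [neg_pi_add_two_pi] using hper.intervalIntegral_comp_add_right (-π) (π / 2)
    _ = 2 * π * besselJ0 x := integral_cos_mul_sin x

lemma integral_sin_mul_cos (x : ℝ) : ∫ t in -π..π, sin (x * cos t) = 0 := by
  have hper : Periodic (fun t ↦ sin (x * cos t)) (2 * π) := fun t ↦ by simp [cos_add_two_pi]
  have hreflect := hper.intervalIntegral_comp_sub_left (-π) π
  simp only [neg_pi_add_two_pi, cos_pi_sub, mul_neg, sin_neg, intervalIntegral.integral_neg]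
    at hreflect
  linarith

lemma integral_besselJ0_mul_sin (a : ℝ) :
    ∫ θ in -π..π, besselJ0 (a * sin θ) = 2 * π * besselJ0 (a / 2) ^ 2 := by
  set C : ℝ → ℝ := fun t ↦ cos (a / 2 * cos t)
  set S : ℝ → ℝ := fun t ↦ sin (a / 2 * cos t)
  have hC : Continuous C := by fun_prop
  have hS : Continuous S := by fun_prop
  have hCper : Periodic C (2 * π) := fun t ↦ by simp [C, cos_add_two_pi]
  have hSper : Periodic S (2 * π) := fun t ↦ by simp [S, cos_add_two_pi]
  have hsplit (θ φ : ℝ) :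
      cos (a * sin θ * sin φ) = C (θ - φ) * C (θ + φ) + S (θ - φ) * S (θ + φ) := by
    have hprod : a * sin θ * sin φ = a / 2 * cos (θ - φ) - a / 2 * cos (θ + φ) := by
      rw [cos_sub, cos_add]
      ring
    rw [hprod, cos_sub]
  have hinner (θ : ℝ) : ∫ φ in -π..π, cos (a * sin θ * sin φ) =
      (∫ φ in -π..π, C (θ - φ) * C (θ + φ)) + ∫ φ in -π..π, S (θ - φ) * S (θ + φ) := by
    simp_rw [hsplit]
    exact intervalIntegral.integral_add (Continuous.intervalIntegrable (by fun_prop) _ _)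
      (Continuous.intervalIntegrable (by fun_prop) _ _)
  have htorus : 2 * π * ∫ θ in -π..π, besselJ0 (a * sin θ) = (2 * π * besselJ0 (a / 2)) ^ 2 :=
    calc 2 * π * ∫ θ in -π..π, besselJ0 (a * sin θ)
        = ∫ θ in -π..π, ∫ φ in -π..π, cos (a * sin θ * sin φ) := by
          rw [← intervalIntegral.integral_const_mul]
          simp_rw [integral_cos_mul_sin]
      _ = (∫ θ in -π..π, ∫ φ in -π..π, C (θ - φ) * C (θ + φ)) +
            ∫ θ in -π..π, ∫ φ in -π..π, S (θ - φ) * S (θ + φ) := by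
          simp_rw [hinner]
          exact intervalIntegral.integral_add
            (Continuous.intervalIntegrable
              (continuous_parametric_intervalIntegral_of_continuous' (by fun_prop) _ _) _ _)
            (Continuous.intervalIntegrable
              (continuous_parametric_intervalIntegral_of_continuous' (by fun_prop) _ _) _ _)
      _ = (∫ t in -π..π, C t) ^ 2 + (∫ t in -π..π, S t) ^ 2 := by
          have hCC := intervalIntegral_intervalIntegral_mul_sub_add hC hC hCper hCper (-π)
          have hSS := intervalIntegral_intervalIntegral_mul_sub_add hS hS hSper hSper (-π)
          simp only [neg_pi_add_two_pi] at hCC hSS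
          rw [hCC, hSS, sq, sq]
      _ = (2 * π * besselJ0 (a / 2)) ^ 2 := by
          rw [integral_cos_mul_cos, integral_sin_mul_cos]
          ring
  have hπ : 2 * π ≠ 0 := by positivity
  exact mul_left_cancel₀ hπ (htorus.trans (by ring))

lemma integral_besselJ0_mul_sin_zero_pi_div_two (a : ℝ) :
    ∫ θ in 0..π / 2, besselJ0 (a * sin θ) = π / 2 * besselJ0 (a / 2) ^ 2 := by
  set g : ℝ → ℝ := fun θ ↦ besselJ0 (a * sin θ)
  have hg : Continuous g := continuous_besselJ0.comp (by fun_prop)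
  have hper : Periodic g π := fun θ ↦ by simp only [g, sin_add_pi, mul_neg, besselJ0_neg]
  have hsymm (θ : ℝ) : g (0 + π - θ) = g θ := by simp only [g, zero_add, sin_pi_sub]
  have htwo_periods : ∫ θ in -π..π, g θ = 2 * ∫ θ in 0..π, g θ := by
    have := hper.intervalIntegral_add_zsmul_eq 2 (-π) hg.intervalIntegrable
    rw [hper.intervalIntegral_add_eq (-π) 0] at this
    simpa [two_smul, ← two_mul, neg_pi_add_two_pi] using this
  have hhalf := intervalIntegral_eq_two_mul_half_of_symmetric hsymm (hg.intervalIntegrable 0 π)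
  rw [zero_add] at hhalf
  have := integral_besselJ0_mul_sin a
  rw [htwo_periods, hhalf] at this
  linarith

/-- For every real number a,
∫_{μ=0}^{1} J₀(a·μ) / √(1 − μ²) dμ = (π/2) · (J₀(a/2))², the integral being the
Lebesgue integral over (0,1). -/
theorem integral_besselJ0_div_sqrt (a : ℝ) :
    (∫ μ in Set.Ioo (0 : ℝ) 1, besselJ0 (a * μ) / Real.sqrt (1 - μ ^ 2)) =
      (Real.pi / 2) * (besselJ0 (a / 2)) ^ 2 := by
  rw [integral_Ioo_div_sqrt_one_sub_sq, integral_besselJ0_mul_sin_zero_pi_div_two]
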